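/- Let D be a domain and let A ⊆ A' be subrings of D. Suppose that A is right noetherian and that A contains a non-zero right ideal of D, i.e. there is a right ideal J ≠ 0 of D with J ⊆ A. Then A' is right noetherian; moreover A' is a finitely generated right A-module. -/

import Mathlib

/-!
Pick `c ≠ 0` in `J`. Since `J` is a right ideal, `c * D ⊆ J ⊆ A`, so left multiplication by `c`
embeds `A'` into `A` as right `A`-modules (injectively, as `D` is a domain). Hence `A'` is a
noetherian right `A`-module, so it is finitely generated over `A`, and its right ideals, being
in particular `A`-submodules, satisfy the ascending chain condition.
-/

open MulOpposite

namespace Subring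

variable {D : Type*} [Ring D] {A A' : Subring D}

/-- Right multiplication makes `A'` a right `A`-module, encoded as a left `Aᵐᵒᵖ`-module. -/
abbrev opModuleOfLE (h : A ≤ A') : Module Aᵐᵒᵖ A'ᵐᵒᵖ := (RingHom.op (inclusion h)).toModule

theorem isScalarTower_opModuleOfLE (h : A ≤ A') :
    letI := opModuleOfLE h
    IsScalarTower Aᵐᵒᵖ A'ᵐᵒᵖ A'ᵐᵒᵖ :=
  letI := opModuleOfLE h
  ⟨fun _ x y => mul_assoc _ x y⟩

def mulLeftOpLinearMap (h : A ≤ A') {c : D} (hc : ∀ x ∈ A', c * x ∈ A) :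
    letI := opModuleOfLE h
    A'ᵐᵒᵖ →ₗ[Aᵐᵒᵖ] Aᵐᵒᵖ :=
  letI := opModuleOfLE h
  { toFun := fun x => op ⟨c * x.unop, hc _ x.unop.2⟩
    map_add' := fun _ _ => MulOpposite.unop_injective <| Subtype.ext <| mul_add c _ _
    map_smul' := fun _ _ =>
      MulOpposite.unop_injective <| Subtype.ext <| (mul_assoc c _ _).symm }

theorem mulLeftOpLinearMap_injective (h : A ≤ A') {c : D} (hc : ∀ x ∈ A', c * x ∈ A)
    (hreg : IsLeftRegular c) : Function.Injective (mulLeftOpLinearMap h hc) :=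
  fun _ _ hxy =>
    MulOpposite.unop_injective <| Subtype.ext <| hreg <| congrArg (fun z => (z.unop : D)) hxy

theorem isNoetherianRing_op_of_isNoetherian (h : A ≤ A')
    (hA' : letI := opModuleOfLE h; IsNoetherian Aᵐᵒᵖ A'ᵐᵒᵖ) : IsNoetherianRing A'ᵐᵒᵖ :=
  letI := opModuleOfLE h
  haveI := isScalarTower_opModuleOfLE h
  isNoetherian_of_tower Aᵐᵒᵖ hA'

theorem exists_finset_subset_forall_mem_closure_mul (h : A ≤ A')
    (hA' : letI := opModuleOfLE h; Module.Finite Aᵐᵒᵖ A'ᵐᵒᵖ) :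
    ∃ s : Finset D, (s : Set D) ⊆ A' ∧
      ∀ x ∈ A', x ∈ AddSubgroup.closure {z : D | ∃ y ∈ s, ∃ a ∈ A, z = y * a} := by
  classical
  let := opModuleOfLE h
  obtain ⟨T, hT⟩ := hA'.fg_top
  refine ⟨T.image fun t => (t.unop : D), fun y hy => ?_, fun x hx => ?_⟩
  · obtain ⟨t, -, rfl⟩ := Finset.mem_image.1 hy
    exact t.unop.2
  obtain ⟨f, -, hf⟩ := Submodule.mem_span_finset.1 (hT ▸ Submodule.mem_top : op ⟨x, hx⟩ ∈ _)
  have hx : x = ∑ t ∈ T, ((f t • t).unop : D) := by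
    simpa using congrArg (fun z => (z.unop : D)) hf.symm
  rw [hx]
  exact AddSubgroup.sum_mem _ fun t ht =>
    AddSubgroup.subset_closure ⟨_, Finset.mem_image_of_mem _ ht, _, (f t).unop.2, rfl⟩

end Subring

/-- Let `D` be a domain and `A ⊆ A'` subrings of `D`. If `A` is right
noetherian and `A` contains a nonzero right ideal of `D`, then `A'` is right noetherian;
moreover `A'` is a finitely generated right `A`-module. Right noetherianity of a ring `S`
is expressed as `IsNoetherianRing Sᵐᵒᵖ`, and finite generation of `A'` as a right
`A`-module is expressed by a finite subset `s ⊆ A'` whose right `A`-multiples additively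
generate `A'`. -/
theorem subring_containing_right_ideal_rightNoetherian
    {D : Type*} [Ring D] [IsDomain D]
    (A A' : Subring D) (hAA' : A ≤ A')
    (hA : IsNoetherianRing (↥A)ᵐᵒᵖ)
    (J : Submodule Dᵐᵒᵖ D) (hJ : J ≠ ⊥) (hJA : (J : Set D) ⊆ (A : Set D)) :
    IsNoetherianRing (↥A')ᵐᵒᵖ ∧
      ∃ s : Finset D, (s : Set D) ⊆ (A' : Set D) ∧
        ∀ x ∈ A', x ∈ AddSubgroup.closure {z : D | ∃ y ∈ s, ∃ a ∈ A, z = y * a} := by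
  obtain ⟨c, hcJ, hc0⟩ := (Submodule.ne_bot_iff J).mp hJ
  have hc : ∀ x ∈ A', c * x ∈ A := fun x _ => hJA (by simpa using J.smul_mem (op x) hcJ)
  let := Subring.opModuleOfLE hAA'
  have hA' : IsNoetherian Aᵐᵒᵖ A'ᵐᵒᵖ := isNoetherian_of_injective _
    (Subring.mulLeftOpLinearMap_injective hAA' hc (IsRegular.of_ne_zero hc0).left)
  exact ⟨Subring.isNoetherianRing_op_of_isNoetherian hAA' hA',
    Subring.exists_finset_subset_forall_mem_closure_mul hAA' inferInstance⟩
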